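/- Let d ≥ 1 and let k̂ : ℝ^d → ℝ be measurable with 0 ≤ k̂ ≤ 1 and k̂ ∈ L¹(ℝ^d). Define κ(x) := (2π)^{−d} ∫_{ℝ^d} e^{i λ·x} k̂(λ) dλ. Then for every real-valued Schwartz function f on ℝ^d, the series Σ_{n=1}^∞ (1/n!) ∫_{(ℝ^d)^n} Π_{j=1}^n |e^{i f(x_j)} − 1| · |det( κ(x_i − x_j) )_{i,j=1}^n| dx₁ ⋯ dx_n converges; in fact the n-th term is at most (1/n!) · n^{n/2} · ( (2π)^{−d} ‖k̂‖_{L¹} · ∫_{ℝ^d} |e^{i f(x)} − 1| dx )ⁿ. -/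

import Mathlib

/-!
Bound each entry of the matrix `(κ(x_i - x_j))` by `‖κ‖_∞ ≤ (2π)^{-d} ‖k̂‖_{L¹}` and apply
Hadamard's inequality in the form `|det A| ≤ n^{n/2} (max |A_ij|)^n`, obtained from AM-GM applied
to the eigenvalues of `Aᴴ A`. The remaining weight `∏_j |e^{i f(x_j)} - 1|` factorises, so its
integral is the `n`-th power of `∫ |e^{i f} - 1| ≤ ∫ |f| < ∞`. Finally `n^n ≤ e^n n!` gives
`(n^{n/2} xⁿ / n!)² ≤ ((2e x²)ⁿ / n!) · 2⁻ⁿ`, so by AM-GM the series is dominated by the sum of two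
convergent ones.
-/

open MeasureTheory

/-- `κ(x) = (2π)^{-d} ∫ e^{i λ·x} k̂(λ) dλ`. -/
noncomputable def kerFT (d : ℕ) (u : EuclideanSpace ℝ (Fin d) → ℝ)
    (x : EuclideanSpace ℝ (Fin d)) : ℂ :=
  (((2 * Real.pi : ℝ) ^ d)⁻¹ : ℝ) *
    ∫ lam : EuclideanSpace ℝ (Fin d),
      Complex.exp (Complex.I * ((inner ℝ lam x : ℝ) : ℂ)) * (u lam : ℂ)

open Finset Matrix
open scoped Nat

lemma Finset.prod_le_sum_div_card_pow {ι : Type*} (s : Finset ι) {z : ι → ℝ}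
    (hz : ∀ i ∈ s, 0 ≤ z i) : ∏ i ∈ s, z i ≤ ((∑ i ∈ s, z i) / #s) ^ #s := by
  rcases s.eq_empty_or_nonempty with rfl | hs
  · simp
  have hcard : (0 : ℝ) < #s := by exact_mod_cast hs.card_pos
  have hamgm := Real.geom_mean_le_arith_mean s (fun _ => 1) z (fun _ _ => zero_le_one)
    (by simpa using hcard) hz
  simp only [Real.rpow_one, sum_const, nsmul_eq_mul, mul_one, one_mul] at hamgm
  calc ∏ i ∈ s, z i = ((∏ i ∈ s, z i) ^ ((#s : ℝ)⁻¹)) ^ #s :=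
        (Real.rpow_inv_natCast_pow (prod_nonneg hz) hs.card_pos.ne').symm
    _ ≤ ((∑ i ∈ s, z i) / #s) ^ #s :=
        pow_le_pow_left₀ (Real.rpow_nonneg (prod_nonneg hz) _) hamgm _

lemma Real.rpow_natCast_div_two_sq (n : ℕ) : ((n : ℝ) ^ ((n : ℝ) / 2)) ^ 2 = (n : ℝ) ^ n := by
  rw [← Real.rpow_mul_natCast (Nat.cast_nonneg n), ← Real.rpow_natCast]
  norm_num

namespace Matrix

variable {ι 𝕜 : Type*} [Fintype ι] [DecidableEq ι] [RCLike 𝕜]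

lemma norm_det_sq_eq_prod_eigenvalues (A : Matrix ι ι 𝕜) :
    ‖A.det‖ ^ 2 = ∏ i, (isHermitian_conjTranspose_mul_self A).eigenvalues i := by
  have h := (isHermitian_conjTranspose_mul_self A).det_eq_prod_eigenvalues
  rw [det_mul, det_conjTranspose, RCLike.star_def, RCLike.conj_mul] at h
  exact_mod_cast h

lemma sum_eigenvalues_conjTranspose_mul_self (A : Matrix ι ι 𝕜) :
    ∑ i, (isHermitian_conjTranspose_mul_self A).eigenvalues i = ∑ i, ∑ j, ‖A i j‖ ^ 2 := by
  have h := (isHermitian_conjTranspose_mul_self A).trace_eq_sum_eigenvalues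
  simp only [trace, diag_apply, mul_apply, conjTranspose_apply, RCLike.star_def,
    RCLike.conj_mul] at h
  rw [Finset.sum_comm] at h
  exact_mod_cast h.symm

theorem norm_det_le_of_forall_norm_le (A : Matrix ι ι 𝕜) {C : ℝ} (hC : 0 ≤ C)
    (hA : ∀ i j, ‖A i j‖ ≤ C) :
    ‖A.det‖ ≤ (Fintype.card ι : ℝ) ^ ((Fintype.card ι : ℝ) / 2) * C ^ Fintype.card ι := by
  set n := Fintype.card ι
  have hB := isHermitian_conjTranspose_mul_self A
  have hsum : ∑ i, hB.eigenvalues i ≤ n * (n * C ^ 2) := by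
    rw [sum_eigenvalues_conjTranspose_mul_self]
    calc ∑ i, ∑ j, ‖A i j‖ ^ 2 ≤ ∑ _i : ι, ∑ _j : ι, C ^ 2 := by
          gcongr with i _ j _; exact hA i j
      _ = n * (n * C ^ 2) := by simp [n]
  have hsq : ‖A.det‖ ^ 2 ≤ ((n : ℝ) ^ ((n : ℝ) / 2) * C ^ n) ^ 2 := by
    rw [norm_det_sq_eq_prod_eigenvalues, mul_pow, Real.rpow_natCast_div_two_sq, ← pow_mul,
      mul_comm n 2, pow_mul, ← mul_pow]
    refine (prod_le_sum_div_card_pow _ fun i _ => ?_).trans ?_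
    · exact eigenvalues_conjTranspose_mul_self_nonneg A i
    have hnonneg : 0 ≤ ∑ i, hB.eigenvalues i :=
      sum_nonneg fun i _ => eigenvalues_conjTranspose_mul_self_nonneg A i
    refine pow_le_pow_left₀ (div_nonneg hnonneg (Nat.cast_nonneg _)) ?_ _
    exact div_le_of_le_mul₀ (Nat.cast_nonneg _) (by positivity) (by rw [card_univ]; linarith)
  exact (pow_le_pow_iff_left₀ (norm_nonneg _) (by positivity) two_ne_zero).mp hsq

end Matrix

theorem MeasureTheory.integral_prod_mul_norm_det_le {α ι 𝕜 : Type*} [MeasurableSpace α]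
    [Fintype ι] [DecidableEq ι] [RCLike 𝕜] (μ : Measure α) [SigmaFinite μ] {g : α → ℝ}
    (hg0 : ∀ x, 0 ≤ g x) (hg : Integrable g μ) (K : α → α → 𝕜) {C : ℝ} (hC : 0 ≤ C)
    (hK : ∀ x y, ‖K x y‖ ≤ C) :
    ∫ x : ι → α, (∏ j, g (x j)) * ‖(of fun i j => K (x i) (x j)).det‖ ∂(Measure.pi fun _ => μ)
      ≤ (Fintype.card ι : ℝ) ^ ((Fintype.card ι : ℝ) / 2) *
          (C * ∫ y, g y ∂μ) ^ Fintype.card ι := by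
  set n := Fintype.card ι
  have hdom : Integrable (fun x : ι → α => (n : ℝ) ^ ((n : ℝ) / 2) * ∏ j, C * g (x j))
      (Measure.pi fun _ => μ) :=
    (Integrable.fintype_prod (f := fun _ y => C * g y) fun _ => hg.const_mul C).const_mul _
  calc ∫ x : ι → α, (∏ j, g (x j)) * ‖(of fun i j => K (x i) (x j)).det‖ ∂(Measure.pi fun _ => μ)
      ≤ ∫ x : ι → α, (n : ℝ) ^ ((n : ℝ) / 2) * ∏ j, C * g (x j) ∂(Measure.pi fun _ => μ) := by
        refine integral_mono_of_nonneg (ae_of_all _ fun x => ?_) hdom (ae_of_all _ fun x => ?_)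
        · exact mul_nonneg (prod_nonneg fun j _ => hg0 _) (norm_nonneg _)
        calc (∏ j, g (x j)) * ‖(of fun i j => K (x i) (x j)).det‖
            ≤ (∏ j, g (x j)) * ((n : ℝ) ^ ((n : ℝ) / 2) * C ^ n) := by
              gcongr
              · exact prod_nonneg fun j _ => hg0 _
              exact norm_det_le_of_forall_norm_le _ hC fun i j => hK _ _
          _ = (n : ℝ) ^ ((n : ℝ) / 2) * ∏ j, C * g (x j) := by
              rw [prod_mul_distrib, prod_const, card_univ]; ring
    _ = (n : ℝ) ^ ((n : ℝ) / 2) * (C * ∫ y, g y ∂μ) ^ n := by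
        rw [integral_const_mul, integral_fintype_prod_eq_pow (fun y => C * g y),
          integral_const_mul]

lemma summable_one_div_factorial_mul_rpow_mul_pow {x : ℝ} (hx : 0 ≤ x) :
    Summable fun n : ℕ => 1 / (n ! : ℝ) * (n : ℝ) ^ ((n : ℝ) / 2) * x ^ n := by
  set a : ℕ → ℝ := fun n => (2 * Real.exp 1 * x ^ 2) ^ n / (n ! : ℝ)
  set b : ℕ → ℝ := fun n => (1 / 2) ^ n
  refine Summable.of_nonneg_of_le (fun n => by positivity) (fun n => ?_)
    (((Real.summable_pow_div_factorial _).add summable_geometric_two).div_const 2 :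
      Summable fun n => (a n + b n) / 2)
  set t := 1 / (n ! : ℝ) * (n : ℝ) ^ ((n : ℝ) / 2) * x ^ n
  have hfac : (0 : ℝ) < n ! := by positivity
  have hpow : (n : ℝ) ^ n ≤ Real.exp n * n ! := by
    rw [← div_le_iff₀ hfac]; exact Real.pow_div_factorial_le_exp _ (Nat.cast_nonneg n) n
  have hab : t ^ 2 ≤ a n * b n := by
    have hexp : Real.exp n = Real.exp 1 ^ n := by rw [← Real.exp_nat_mul, mul_one]
    calc t ^ 2 = (n : ℝ) ^ n * (x ^ 2) ^ n / (n ! * n !) := by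
          simp only [t, mul_pow, Real.rpow_natCast_div_two_sq]; field_simp; ring
      _ ≤ Real.exp n * n ! * (x ^ 2) ^ n / (n ! * n !) := by gcongr
      _ = a n * b n := by
          simp only [a, b, hexp, mul_pow, div_pow, one_pow]; field_simp
  have ha : 0 ≤ a n := by positivity
  have hb : 0 ≤ b n := by positivity
  have ht : 0 ≤ t := by positivity
  -- `t ≤ √(a b) ≤ (a + b) / 2`
  nlinarith [sq_nonneg (a n - b n), sq_nonneg (t - (a n + b n) / 2)]

lemma MeasureTheory.Integrable.norm_exp_I_mul_sub_one {α : Type*} [MeasurableSpace α]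
    {μ : Measure α} {f : α → ℝ} (hf : Integrable f μ) :
    Integrable (fun y => ‖Complex.exp (Complex.I * f y) - 1‖) μ := by
  refine hf.norm.mono' ?_ (ae_of_all _ fun y => ?_)
  · exact (by fun_prop : Continuous fun t : ℝ => ‖Complex.exp (Complex.I * t) - 1‖)
      |>.comp_aestronglyMeasurable hf.aestronglyMeasurable
  · rw [norm_norm]; exact Real.norm_exp_I_mul_ofReal_sub_one_le

lemma norm_kerFT_le {d : ℕ} {u : EuclideanSpace ℝ (Fin d) → ℝ} (hu : ∀ l, 0 ≤ u l)
    (x : EuclideanSpace ℝ (Fin d)) :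
    ‖kerFT d u x‖ ≤ ((2 * Real.pi : ℝ) ^ d)⁻¹ * ∫ l, u l := by
  rw [kerFT, norm_mul, Complex.norm_real, Real.norm_of_nonneg (by positivity)]
  gcongr
  refine (norm_integral_le_integral_norm _).trans_eq (integral_congr_ae (ae_of_all _ fun l => ?_))
  simp [Complex.norm_exp, abs_of_nonneg (hu l)]

theorem stmt8_general (d : ℕ)
    (khat : EuclideanSpace ℝ (Fin d) → ℝ)
    (hk0 : ∀ lam, 0 ≤ khat lam)
    (f : SchwartzMap (EuclideanSpace ℝ (Fin d)) ℝ) :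
    (∀ n : ℕ, 1 ≤ n →
      (1 / (Nat.factorial n : ℝ)) *
          ∫ x : Fin n → EuclideanSpace ℝ (Fin d),
            (∏ j : Fin n, ‖Complex.exp (Complex.I * (f (x j) : ℝ)) - 1‖) *
              ‖(Matrix.of fun i j : Fin n => kerFT d khat (x i - x j)).det‖
        ≤ (1 / (Nat.factorial n : ℝ)) * (n : ℝ) ^ ((n : ℝ) / 2) *
            ((((2 * Real.pi : ℝ) ^ d)⁻¹ * (∫ lam : EuclideanSpace ℝ (Fin d), khat lam) *
              ∫ y : EuclideanSpace ℝ (Fin d),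
                ‖Complex.exp (Complex.I * (f y : ℝ)) - 1‖) ^ n)) ∧
    Summable (fun n : ℕ =>
      (1 / (Nat.factorial n : ℝ)) *
        ∫ x : Fin n → EuclideanSpace ℝ (Fin d),
          (∏ j : Fin n, ‖Complex.exp (Complex.I * (f (x j) : ℝ)) - 1‖) *
            ‖(Matrix.of fun i j : Fin n => kerFT d khat (x i - x j)).det‖) := by
  have hC : 0 ≤ ((2 * Real.pi : ℝ) ^ d)⁻¹ * ∫ lam, khat lam :=
    mul_nonneg (by positivity) (integral_nonneg hk0)
  have hbound (n : ℕ) := mul_le_mul_of_nonneg_left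
    (integral_prod_mul_norm_det_le (ι := Fin n) volume (fun _ => norm_nonneg _)
      f.integrable.norm_exp_I_mul_sub_one (fun x y => kerFT d khat (x - y)) hC
      fun x y => norm_kerFT_le hk0 (x - y))
    (by positivity : (0 : ℝ) ≤ 1 / (n ! : ℝ))
  simp only [Fintype.card_fin, ← mul_assoc] at hbound
  refine ⟨fun n _ => hbound n, Summable.of_nonneg_of_le (fun n => ?_) hbound
    (summable_one_div_factorial_mul_rpow_mul_pow
      (mul_nonneg hC (integral_nonneg fun _ => norm_nonneg _)))⟩
  exact mul_nonneg (by positivity)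
    (integral_nonneg fun x => mul_nonneg (prod_nonneg fun j _ => norm_nonneg _) (norm_nonneg _))

/-- absolute convergence of the series in the Fourier-transform formula
(zhgders98) for the fermion measure: the `n`-th term
`(1/n!) ∫_{(ℝ^d)^n} Π_j |e^{i f(x_j)} - 1| · |det(κ(x_i - x_j))| dx` is bounded by
`(1/n!) n^{n/2} ((2π)^{-d} ‖k̂‖_{L¹} ∫ |e^{i f(x)} - 1| dx)ⁿ`, and the series over `n`
converges. -/
theorem stmt8 (d : ℕ) (hd : 1 ≤ d)
    (khat : EuclideanSpace ℝ (Fin d) → ℝ) (hkm : Measurable khat)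
    (hk0 : ∀ lam, 0 ≤ khat lam) (hk1 : ∀ lam, khat lam ≤ 1)
    (hkL1 : Integrable khat (volume : Measure (EuclideanSpace ℝ (Fin d))))
    (f : SchwartzMap (EuclideanSpace ℝ (Fin d)) ℝ) :
    (∀ n : ℕ, 1 ≤ n →
      (1 / (Nat.factorial n : ℝ)) *
          ∫ x : Fin n → EuclideanSpace ℝ (Fin d),
            (∏ j : Fin n, ‖Complex.exp (Complex.I * (f (x j) : ℝ)) - 1‖) *
              ‖(Matrix.of fun i j : Fin n => kerFT d khat (x i - x j)).det‖
        ≤ (1 / (Nat.factorial n : ℝ)) * (n : ℝ) ^ ((n : ℝ) / 2) *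
            ((((2 * Real.pi : ℝ) ^ d)⁻¹ * (∫ lam : EuclideanSpace ℝ (Fin d), khat lam) *
              ∫ y : EuclideanSpace ℝ (Fin d),
                ‖Complex.exp (Complex.I * (f y : ℝ)) - 1‖) ^ n)) ∧
    Summable (fun n : ℕ =>
      (1 / (Nat.factorial n : ℝ)) *
        ∫ x : Fin n → EuclideanSpace ℝ (Fin d),
          (∏ j : Fin n, ‖Complex.exp (Complex.I * (f (x j) : ℝ)) - 1‖) *
            ‖(Matrix.of fun i j : Fin n => kerFT d khat (x i - x j)).det‖) :=
  stmt8_general d khat hk0 f
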